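/- Let τ′ be a principal quadratic point in the upper half-plane of discriminant D with |D| ≥ 16 (so Im τ′ = √|D|/2 ≥ 2). Then |χ*(τ′)| ≥ 0.5·e^{π√|D|} − 7167. -/

import Mathlib

/-!
For a principal point, `Im τ = √|D|/2 ≥ 2`, so the nome `q = e^{2πiτ}` satisfies
`|q| = e^{-π√|D|} ≤ e^{-4π} < 1/250000`. Write `χ* = (E₂ - 3/(π Im τ)) E₄ E₆ / Δ`.
Since `σ_k(n) ≤ (2^{k+1})ⁿ`, each `q`-series `∑ σ_k(n) qⁿ` is `q + O(|q|²)` with an explicit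
geometric bound. Hence `|E₂ - 3/(π Im τ)| ≥ 1 - 3/(2π) - O(|q|) > 0.522`, `E₄` and `E₆` lie within
`0.003` of `1`, and `E₄³ - E₆² = 1728 q + O(|q|²)` has norm at most `1770 |q|`, so that
`|χ*(τ)| ≥ 0.5 / |q| = 0.5 e^{π√|D|}`.
-/

open Complex

noncomputable section

/-- `sigma' k n = ∑_{d ∣ n} d^k`, the sum of the k-th powers of the positive divisors of n. -/
def sigma' (k n : ℕ) : ℕ := ∑ d ∈ n.divisors, d ^ k

/-- `qpar τ = e^{2πiτ}`. -/
def qpar (τ : ℂ) : ℂ := Complex.exp (2 * Real.pi * Complex.I * τ)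

/-- The quasimodular Eisenstein series `E₂(τ) = 1 - 24 ∑_{n≥1} σ₁(n) qⁿ`. -/
def E2 (τ : ℂ) : ℂ := 1 - 24 * ∑' n : ℕ, (sigma' 1 (n + 1) : ℂ) * qpar τ ^ (n + 1)

/-- The Eisenstein series `E₄(τ) = 1 + 240 ∑_{n≥1} σ₃(n) qⁿ`. -/
def E4 (τ : ℂ) : ℂ := 1 + 240 * ∑' n : ℕ, (sigma' 3 (n + 1) : ℂ) * qpar τ ^ (n + 1)

/-- The Eisenstein series `E₆(τ) = 1 - 504 ∑_{n≥1} σ₅(n) qⁿ`. -/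
def E6 (τ : ℂ) : ℂ := 1 - 504 * ∑' n : ℕ, (sigma' 5 (n + 1) : ℂ) * qpar τ ^ (n + 1)

/-- The modular discriminant `Δ = (E₄³ - E₆²)/1728`. -/
def Δ' (τ : ℂ) : ℂ := (E4 τ ^ 3 - E6 τ ^ 2) / 1728

/-- The modular j-invariant `j = E₄³/Δ`. -/
def jinv (τ : ℂ) : ℂ := E4 τ ^ 3 / Δ' τ

/-- `χ = E₂E₄E₆/Δ`. -/
def χ' (τ : ℂ) : ℂ := E2 τ * E4 τ * E6 τ / Δ' τ

/-- `ξ = E₄E₆/Δ`. -/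
def ξ' (τ : ℂ) : ℂ := E4 τ * E6 τ / Δ' τ

/-- The almost holomorphic modular function `χ*(τ) = χ(τ) - (3/(π Im τ)) ξ(τ)`. -/
def χstar (τ : ℂ) : ℂ := χ' τ - (3 / (Real.pi * τ.im) : ℝ) * ξ' τ

/-- `τ` lies in the upper half-plane and satisfies `aτ² + bτ + c = 0` where
`a > 0` and `gcd(a,b,c) = 1`. -/
def QuadPoint (τ : ℂ) (a b c : ℤ) : Prop :=
  0 < τ.im ∧ 0 < a ∧ Int.gcd (Int.gcd a b) c = 1 ∧
    (a : ℂ) * τ ^ 2 + (b : ℂ) * τ + (c : ℂ) = 0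

/-- `τ` is a quadratic point of the upper half-plane. -/
def IsQuadratic (τ : ℂ) : Prop := ∃ a b c : ℤ, QuadPoint τ a b c

/-- `τ` is a quadratic point of discriminant `D = b² - 4ac`. -/
def HasDisc (τ : ℂ) (D : ℤ) : Prop :=
  ∃ a b c : ℤ, QuadPoint τ a b c ∧ D = b ^ 2 - 4 * a * c

/-- Membership in the closed standard fundamental domain
`F = {z ∈ ℍ : |z| ≥ 1, -1/2 ≤ Re z ≤ 1/2}`. -/
def inF (τ : ℂ) : Prop :=
  0 < τ.im ∧ 1 ≤ ‖τ‖ ∧ -(1 / 2) ≤ τ.re ∧ τ.re ≤ 1 / 2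

/-- `τ` and `τ'` lie in the same `SL₂(ℤ)`-orbit under Möbius transformations. -/
def MoebiusEquiv (τ τ' : ℂ) : Prop :=
  ∃ γ : Matrix.SpecialLinearGroup (Fin 2) ℤ,
    τ' = ((γ.1 0 0 : ℂ) * τ + (γ.1 0 1 : ℂ)) / ((γ.1 1 0 : ℂ) * τ + (γ.1 1 1 : ℂ))

lemma sigma'_one (k : ℕ) : sigma' k 1 = 1 := by simp [sigma']

lemma sigma'_le_pow_succ (k n : ℕ) : sigma' k n ≤ n ^ (k + 1) :=
  calc sigma' k n ≤ ∑ _d ∈ n.divisors, n ^ k :=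
        Finset.sum_le_sum fun _ hd => Nat.pow_le_pow_left (Nat.divisor_le hd) k
    _ = n.divisors.card * n ^ k := by rw [Finset.sum_const, smul_eq_mul]
    _ ≤ n * n ^ k := Nat.mul_le_mul_right _ n.card_divisors_le_self
    _ = n ^ (k + 1) := by rw [pow_succ, mul_comm]

lemma sigma'_le_two_pow (k n : ℕ) : sigma' k n ≤ (2 ^ (k + 1)) ^ n :=
  calc sigma' k n ≤ n ^ (k + 1) := sigma'_le_pow_succ k n
    _ ≤ (2 ^ n) ^ (k + 1) := Nat.pow_le_pow_left n.lt_two_pow_self.le _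
    _ = (2 ^ (k + 1)) ^ n := by rw [← pow_mul, ← pow_mul, mul_comm]

lemma norm_tsum_sub_apply_zero_le {E : Type*} [NormedAddCommGroup E] [CompleteSpace E]
    {f : ℕ → E} {x : ℝ} (hx : x ≤ 1 / 2) (hf : ∀ n, ‖f n‖ ≤ x ^ (n + 1)) :
    ‖(∑' n, f n) - f 0‖ ≤ 2 * x ^ 2 := by
  have hx0 : 0 ≤ x := by simpa using (norm_nonneg _).trans (hf 0)
  have hx1 : x < 1 := by linarith
  have hgeom : Summable fun n : ℕ => x ^ 2 * x ^ n :=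
    (summable_geometric_of_lt_one hx0 hx1).mul_left _
  have htail : ∀ n, ‖f (n + 1)‖ ≤ x ^ 2 * x ^ n := fun n => by
    rw [mul_comm, ← pow_add]; exact hf (n + 1)
  have hsum : Summable fun n => f (n + 1) := Summable.of_norm_bounded hgeom htail
  rw [(summable_nat_add_iff 1).mp hsum |>.tsum_eq_zero_add, add_sub_cancel_left]
  calc ‖∑' n, f (n + 1)‖ ≤ ∑' n : ℕ, x ^ 2 * x ^ n := tsum_of_norm_bounded hgeom.hasSum htail
    _ = x ^ 2 * (1 - x)⁻¹ := by rw [tsum_mul_left, tsum_geometric_of_lt_one hx0 hx1]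
    _ ≤ x ^ 2 * 2 := by
        gcongr
        rw [inv_le_comm₀ (by linarith) (by norm_num)]
        linarith
    _ = 2 * x ^ 2 := mul_comm _ _

def divisorSeries (k : ℕ) (q : ℂ) : ℂ := ∑' n : ℕ, (sigma' k (n + 1) : ℂ) * q ^ (n + 1)

lemma norm_divisorSeries_sub_le {k : ℕ} {q : ℂ} (hq : 2 ^ (k + 1) * ‖q‖ ≤ 1 / 2) :
    ‖divisorSeries k q - q‖ ≤ 2 * 4 ^ (k + 1) * ‖q‖ ^ 2 := by
  have hterm : ∀ n : ℕ, ‖(sigma' k (n + 1) : ℂ) * q ^ (n + 1)‖ ≤ (2 ^ (k + 1) * ‖q‖) ^ (n + 1) :=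
    fun n => by
      rw [norm_mul, norm_pow, mul_pow, Complex.norm_natCast]
      gcongr
      exact_mod_cast sigma'_le_two_pow k (n + 1)
  have h := norm_tsum_sub_apply_zero_le hq hterm
  simp only [zero_add, sigma'_one, Nat.cast_one, one_mul, pow_one] at h
  calc ‖divisorSeries k q - q‖ ≤ 2 * (2 ^ (k + 1) * ‖q‖) ^ 2 := h
    _ = 2 * 4 ^ (k + 1) * ‖q‖ ^ 2 := by
      rw [mul_pow, ← pow_mul, mul_comm (k + 1) 2, pow_mul]; norm_num; ring

lemma norm_divisorSeries_le {k : ℕ} {q : ℂ} (hq : 2 ^ (k + 1) * ‖q‖ ≤ 1 / 2) :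
    ‖divisorSeries k q‖ ≤ ‖q‖ + 2 * 4 ^ (k + 1) * ‖q‖ ^ 2 :=
  (norm_le_norm_add_norm_sub' _ q).trans (add_le_add_right (norm_divisorSeries_sub_le hq) _)

lemma E2_eq (τ : ℂ) : E2 τ = 1 - 24 * divisorSeries 1 (qpar τ) := rfl

lemma E4_eq (τ : ℂ) : E4 τ = 1 + 240 * divisorSeries 3 (qpar τ) := rfl

lemma E6_eq (τ : ℂ) : E6 τ = 1 - 504 * divisorSeries 5 (qpar τ) := rfl

lemma χstar_eq (τ : ℂ) :
    χstar τ = (E2 τ - ((3 / (Real.pi * τ.im) : ℝ) : ℂ)) * E4 τ * E6 τ / Δ' τ := by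
  rw [χstar, χ', ξ']; ring

section SmallNome

variable {τ : ℂ}

lemma norm_E2_sub_ofReal_ge (hq : ‖qpar τ‖ ≤ 1 / 250000) {c : ℝ} (hc : c ≤ 0.4775) :
    0.522 ≤ ‖E2 τ - c‖ := by
  have hS := norm_divisorSeries_le (k := 1) (q := qpar τ) (by norm_num; linarith)
  calc (0.522 : ℝ) ≤ (1 - c) - 24 * ‖divisorSeries 1 (qpar τ)‖ := by
        norm_num at hS; nlinarith [norm_nonneg (qpar τ)]
    _ ≤ ‖((1 - c : ℝ) : ℂ)‖ - ‖24 * divisorSeries 1 (qpar τ)‖ := by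
        rw [Complex.norm_real, norm_mul, Real.norm_eq_abs, Complex.norm_ofNat]
        exact sub_le_sub_right (le_abs_self _) _
    _ ≤ ‖E2 τ - c‖ := by
        refine (norm_sub_norm_le _ _).trans_eq ?_
        rw [E2_eq]; push_cast; ring_nf

lemma norm_E4_ge (hq : ‖qpar τ‖ ≤ 1 / 250000) : 0.998 ≤ ‖E4 τ‖ := by
  have hS := norm_divisorSeries_le (k := 3) (q := qpar τ) (by norm_num; linarith)
  calc (0.998 : ℝ) ≤ ‖(1 : ℂ)‖ - ‖240 * divisorSeries 3 (qpar τ)‖ := by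
        rw [norm_mul]; norm_num at hS ⊢; nlinarith [norm_nonneg (qpar τ)]
    _ ≤ ‖E4 τ‖ := by
        rw [E4_eq, ← sub_neg_eq_add]
        exact (norm_neg (240 * divisorSeries 3 (qpar τ))) ▸ norm_sub_norm_le _ _

lemma norm_E6_ge (hq : ‖qpar τ‖ ≤ 1 / 250000) : 0.997 ≤ ‖E6 τ‖ := by
  have hS := norm_divisorSeries_le (k := 5) (q := qpar τ) (by norm_num; linarith)
  calc (0.997 : ℝ) ≤ ‖(1 : ℂ)‖ - ‖504 * divisorSeries 5 (qpar τ)‖ := by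
        rw [norm_mul]; norm_num at hS ⊢; nlinarith [norm_nonneg (qpar τ)]
    _ ≤ ‖E6 τ‖ := by rw [E6_eq]; exact norm_sub_norm_le _ _

lemma norm_E4_cube_sub_E6_sq_sub_le (hq : ‖qpar τ‖ ≤ 1 / 250000) :
    ‖E4 τ ^ 3 - E6 τ ^ 2 - 1728 * qpar τ‖ ≤ 42 * ‖qpar τ‖ := by
  have hs := norm_divisorSeries_sub_le (k := 3) (q := qpar τ) (by norm_num; linarith)
  have ht := norm_divisorSeries_sub_le (k := 5) (q := qpar τ) (by norm_num; linarith)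
  have hs' := norm_divisorSeries_le (k := 3) (q := qpar τ) (by norm_num; linarith)
  have ht' := norm_divisorSeries_le (k := 5) (q := qpar τ) (by norm_num; linarith)
  norm_num at hs ht hs' ht'
  set q := qpar τ
  set s := divisorSeries 3 q
  set t := divisorSeries 5 q
  have hexpand : E4 τ ^ 3 - E6 τ ^ 2 - 1728 * q =
      720 * (s - q) + 1008 * (t - q) + 172800 * s ^ 2 + 13824000 * s ^ 3 - 254016 * t ^ 2 := by
    rw [E4_eq, E6_eq]; ring
  have htri : ‖E4 τ ^ 3 - E6 τ ^ 2 - 1728 * q‖ ≤ 720 * ‖s - q‖ + 1008 * ‖t - q‖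
      + 172800 * ‖s‖ ^ 2 + 13824000 * ‖s‖ ^ 3 + 254016 * ‖t‖ ^ 2 := by
    rw [hexpand]
    refine norm_sub_le_of_le (norm_add_le_of_le (norm_add_le_of_le (norm_add_le_of_le ?_ ?_) ?_) ?_) ?_
      <;> simp [norm_pow]
  have hq0 := norm_nonneg q
  have hs2 : ‖s‖ ^ 2 ≤ (2 * ‖q‖) ^ 2 := pow_le_pow_left₀ (norm_nonneg s) (by nlinarith) 2
  have hs3 : ‖s‖ ^ 3 ≤ (2 * ‖q‖) ^ 3 := pow_le_pow_left₀ (norm_nonneg s) (by nlinarith) 3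
  have ht2 : ‖t‖ ^ 2 ≤ (2 * ‖q‖) ^ 2 := pow_le_pow_left₀ (norm_nonneg t) (by nlinarith) 2
  have hr2 : ‖q‖ ^ 2 ≤ ‖q‖ / 250000 := by nlinarith
  have hr3 : ‖q‖ ^ 3 ≤ ‖q‖ / 250000 ^ 2 := by nlinarith
  linarith

lemma norm_χstar_ge_of_norm_qpar_le (hq : ‖qpar τ‖ ≤ 1 / 250000) (hc : 3 / (Real.pi * τ.im) ≤ 0.4775) :
    0.5 / ‖qpar τ‖ ≤ ‖χstar τ‖ := by
  have hnum : 0.522 * 0.998 * 0.997 ≤ ‖E2 τ - ((3 / (Real.pi * τ.im) : ℝ) : ℂ)‖ * ‖E4 τ‖ * ‖E6 τ‖ :=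
    mul_le_mul (mul_le_mul (norm_E2_sub_ofReal_ge hq hc) (norm_E4_ge hq) (by norm_num)
      (norm_nonneg _)) (norm_E6_ge hq) (by norm_num) (by positivity)
  have hden := norm_E4_cube_sub_E6_sq_sub_le hq
  have hden_le : ‖E4 τ ^ 3 - E6 τ ^ 2‖ ≤ 1770 * ‖qpar τ‖ := by
    have := norm_le_norm_add_norm_sub' (E4 τ ^ 3 - E6 τ ^ 2) (1728 * qpar τ)
    rw [norm_mul, Complex.norm_ofNat] at this
    linarith
  have hr : 0 < ‖qpar τ‖ := norm_pos_iff.2 (Complex.exp_ne_zero _)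
  have hden_pos : 0 < ‖E4 τ ^ 3 - E6 τ ^ 2‖ := by
    have := norm_sub_norm_le (1728 * qpar τ) (E4 τ ^ 3 - E6 τ ^ 2)
    rw [norm_mul, Complex.norm_ofNat, norm_sub_rev (1728 * qpar τ)] at this
    linarith
  rw [χstar_eq, Δ', norm_div, norm_div, norm_mul, norm_mul, Complex.norm_ofNat,
    div_div_eq_mul_div, div_le_div_iff₀ hr hden_pos]
  nlinarith [mul_le_mul_of_nonneg_right hnum hr.le]

end SmallNome

lemma norm_qpar (τ : ℂ) : ‖qpar τ‖ = Real.exp (-(2 * Real.pi * τ.im)) := by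
  simp [qpar, Complex.norm_exp, Complex.mul_re]

lemma exp_four_pi_gt : 250000 < Real.exp (4 * Real.pi) :=
  calc (250000 : ℝ) < 2.7182818283 ^ 12 * (1 + 0.5663) := by norm_num
    _ ≤ Real.exp 1 ^ 12 * Real.exp 0.5663 := by
        gcongr
        · exact Real.exp_one_gt_d9.le
        · linarith [Real.add_one_le_exp (0.5663 : ℝ)]
    _ = Real.exp 12.5663 := by rw [← Real.exp_nat_mul, ← Real.exp_add]; norm_num
    _ < Real.exp (4 * Real.pi) := Real.exp_lt_exp.2 (by linarith [Real.pi_gt_d6])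

lemma norm_χstar_ge_of_two_le_im {τ : ℂ} (hy : 2 ≤ τ.im) :
    0.5 * Real.exp (2 * Real.pi * τ.im) ≤ ‖χstar τ‖ := by
  have hexp : 250000 < Real.exp (2 * Real.pi * τ.im) :=
    exp_four_pi_gt.trans_le (Real.exp_le_exp.2 (by nlinarith [Real.pi_pos]))
  have hq : ‖qpar τ‖ ≤ 1 / 250000 := by
    rw [norm_qpar, Real.exp_neg, one_div]
    exact inv_anti₀ (by norm_num) hexp.le
  have hc : 3 / (Real.pi * τ.im) ≤ 0.4775 := by
    rw [div_le_iff₀ (by positivity)]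
    nlinarith [Real.pi_gt_d6]
  simpa [norm_qpar, Real.exp_neg, div_eq_mul_inv] using norm_χstar_ge_of_norm_qpar_le hq hc

lemma QuadPoint.sqrt_abs_disc_eq {τ : ℂ} {a b c : ℤ} (h : QuadPoint τ a b c) :
    Real.sqrt |(b : ℝ) ^ 2 - 4 * a * c| = 2 * a * τ.im := by
  obtain ⟨hy, ha, -, heq⟩ := h
  have hre := congrArg Complex.re heq
  have him := congrArg Complex.im heq
  simp only [sq, Complex.add_re, Complex.add_im, Complex.mul_re, Complex.mul_im,
    Complex.intCast_re, Complex.intCast_im, Complex.zero_re, Complex.zero_im] at hre him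
  have hb : (b : ℝ) + 2 * a * τ.re = 0 := by
    have : ((b : ℝ) + 2 * a * τ.re) * τ.im = 0 := by linear_combination him
    simpa [hy.ne'] using this
  have hdisc : (b : ℝ) ^ 2 - 4 * a * c = -(2 * a * τ.im) ^ 2 := by
    linear_combination (↑b + 2 * ↑a * τ.re) * hb - 4 * (a : ℝ) * hre
  have ha' : (0 : ℝ) < a := by exact_mod_cast ha
  rw [hdisc, abs_neg, abs_sq, Real.sqrt_sq (by positivity)]

/-- For a principal quadratic point `τ` of discriminant `D` with `|D| ≥ 16`,
`|χ*(τ)| ≥ 0.5 e^{π√|D|} - 7167`. -/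
theorem principal_chi_star_lower_bound (τ : ℂ) (D b c : ℤ)
    (h : QuadPoint τ 1 b c) (hD : D = b ^ 2 - 4 * c) (h16 : 16 ≤ |D|) :
    0.5 * Real.exp (Real.pi * Real.sqrt |(D : ℝ)|) - 7167 ≤ ‖χstar τ‖ := by
  have hsqrt : Real.sqrt |(D : ℝ)| = 2 * τ.im := by
    simpa [hD] using h.sqrt_abs_disc_eq
  have hy : 2 ≤ τ.im := by
    have : (4 : ℝ) ≤ Real.sqrt |(D : ℝ)| :=
      Real.le_sqrt_of_sq_le (by rw [← Int.cast_abs]; exact_mod_cast h16)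
    linarith
  have hbound := norm_χstar_ge_of_two_le_im hy
  rw [hsqrt, ← mul_assoc, mul_comm Real.pi 2]
  linarith
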